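/- arXiv:2203.04192 — 5 statements merged into one kernel-verified Lean document; each statement's English description precedes it below -/
import Mathlib

section
/- Let Θ be a nonempty set, let K ≥ 1, let ℓ : Θ → ℝ and f : Fin K → Θ → ℝ, and let α ≥ 0. Suppose θ† ∈ Θ satisfies ℓ(θ†) + α·max_{a} f a θ† ≥ ℓ(θ) + α·max_{a} f a θ for all θ ∈ Θ, and for each arm a ∈ Fin K suppose θ_a ∈ Θ satisfies ℓ(θ_a) + α·f a θ_a ≥ ℓ(θ) + α·f a θ for all θ ∈ Θ. If an arm a* satisfies f a* θ† ≥ f a θ† for every arm a (i.e. a* maximizes the estimated reward under θ†), then a* also maximizes the RBMLE index: ℓ(θ_{a*}) + α·f a* θ_{a*} ≥ ℓ(θ_a) + α·f a θ_a for every arm a. -/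
/-- an arm maximizing the estimated reward under the RBMLE estimator θ†
also maximizes the arm-specific RBMLE index. -/
theorem stmt2 {Θ : Type*} [Nonempty Θ] {K : ℕ} (hK : 1 ≤ K)
    (L : Θ → ℝ) (f : Fin K → Θ → ℝ) (α : ℝ) (hα : 0 ≤ α)
    (θd : Θ)
    (hθd : ∀ θ : Θ, L θ + α * (⨆ a : Fin K, f a θ) ≤ L θd + α * (⨆ a : Fin K, f a θd))
    (θarm : Fin K → Θ)
    (hθarm : ∀ (a : Fin K) (θ : Θ), L θ + α * f a θ ≤ L (θarm a) + α * f a (θarm a))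
    (astar : Fin K) (hastar : ∀ a : Fin K, f a θd ≤ f astar θd) :
    ∀ a : Fin K, L (θarm a) + α * f a (θarm a) ≤
      L (θarm astar) + α * f astar (θarm astar) := by
  intro a
  have hne : Nonempty (Fin K) := ⟨⟨0, hK⟩⟩
  have hsup_d : (⨆ b : Fin K, f b θd) = f astar θd :=
    le_antisymm (ciSup_le hastar) (le_ciSup (f := fun b => f b θd) (Set.Finite.bddAbove (Set.finite_range _)) astar)
  have h1 : L (θarm a) + α * f a (θarm a) ≤
      L (θarm a) + α * (⨆ b : Fin K, f b (θarm a)) := by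
    gcongr
    exact le_ciSup (f := fun b => f b (θarm a)) (Set.Finite.bddAbove (Set.finite_range _)) a
  calc L (θarm a) + α * f a (θarm a)
      ≤ L (θarm a) + α * (⨆ b : Fin K, f b (θarm a)) := h1
    _ ≤ L θd + α * (⨆ b : Fin K, f b θd) := hθd _
    _ = L θd + α * f astar θd := by rw [hsup_d]
    _ ≤ L (θarm astar) + α * f astar (θarm astar) := hθarm _ _
end

section
/- Let b : ℝ → ℝ be twice differentiable and suppose there are constants 0 < L_b ≤ U_b with L_b ≤ b''(z) ≤ U_b for all z ∈ ℝ, and fix A₁, A₂, A₃ ≥ 0. Then there exists a constant E > 0, depending only on b(0), b'(0), L_b, U_b, A₁, A₂, A₃, such that for every integer t ≥ 3 and all sequences f_1,…,f_t ∈ ℝ and r_1,…,r_t ∈ ℝ satisfying (i) ∑_{s=1}^t ( b(f_s) − r_s·f_s ) ≤ A₁·t·√(log t), (ii) |∑_{s=1}^t r_s| ≤ A₂·t·√(log t), and (iii) ∑_{s=1}^t r_s² ≤ A₃·t·log t, one has ∑_{s=1}^t |b'(f_s)| ≤ E·t·√(log t). -/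
/-!
Since `b'' ≥ L_b`, `b` lies above the quadratic `b(0) + b'(0) z + L_b z² / 2`, so the loss bound (i)
controls `(L_b / 2) ∑ f_s²` by `O(t √log t)` plus the cross term `∑ (r_s - b'(0)) f_s`. By
Cauchy–Schwarz and (iii) the cross term is at most `√(O(t log t) · ∑ f_s²)`, and AM–GM absorbs it,
giving `∑ f_s² = O(t log t)`, hence `∑ |f_s| = O(t √log t)`. Finally `b'` is `U_b`-Lipschitz, so
`|b'(f_s)| ≤ |b'(0)| + U_b |f_s|`.
-/

open Finset

theorem le_of_monotone_deriv_of_deriv_eq_zero {g : ℝ → ℝ} {a : ℝ} (hg : Differentiable ℝ g)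
    (hmono : Monotone (deriv g)) (ha : deriv g a = 0) (x : ℝ) : g a ≤ g x := by
  rcases le_total a x with hax | hxa
  · refine monotoneOn_of_deriv_nonneg (convex_Ici a) hg.continuous.continuousOn
      hg.differentiableOn (fun y hy => ?_) Set.self_mem_Ici hax hax
    rw [interior_Ici] at hy
    exact ha ▸ hmono hy.le
  · refine antitoneOn_of_deriv_nonpos (convex_Iic a) hg.continuous.continuousOn
      hg.differentiableOn (fun y hy => ?_) hxa Set.self_mem_Iic hxa
    rw [interior_Iic] at hy
    exact ha ▸ hmono hy.le

theorem quadratic_minorant_of_le_deriv2 {b : ℝ → ℝ} {L : ℝ} (hb : Differentiable ℝ b)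
    (hb' : Differentiable ℝ (deriv b)) (hL : ∀ z, L ≤ deriv (deriv b) z) (a x : ℝ) :
    b a + deriv b a * (x - a) + L / 2 * (x - a) ^ 2 ≤ b x := by
  have hshift : ∀ y, HasDerivAt (fun y : ℝ => y - a) 1 y := fun y => (hasDerivAt_id y).sub_const a
  set g : ℝ → ℝ := fun y => b y - (b a + deriv b a * (y - a) + L / 2 * (y - a) ^ 2)
  have hg : ∀ y, HasDerivAt g (deriv b y - deriv b a - L * (y - a)) y := fun y =>
    ((hb y).hasDerivAt.sub ((((hshift y).const_mul (deriv b a)).const_add (b a)).add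
      (((hshift y).pow 2).const_mul (L / 2)))).congr_deriv (by norm_num; ring)
  have hg' : deriv g = fun y => deriv b y - deriv b a - L * (y - a) :=
    funext fun y => (hg y).deriv
  have hg'' : ∀ y, HasDerivAt (deriv g) (deriv (deriv b) y - L) y := fun y =>
    hg' ▸ (((hb' y).hasDerivAt.sub_const _).sub ((hshift y).const_mul L)).congr_deriv (by ring)
  have hmono : Monotone (deriv g) :=
    monotone_of_deriv_nonneg (fun y => (hg'' y).differentiableAt)
      (fun y => (hg'' y).deriv ▸ sub_nonneg.mpr (hL y))
  have hmin := le_of_monotone_deriv_of_deriv_eq_zero (a := a)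
    (fun y => (hg y).differentiableAt) hmono (by simp [hg']) x
  simp only [g, sub_self, mul_zero, add_zero, ne_eq, OfNat.ofNat_ne_zero, not_false_eq_true,
    zero_pow] at hmin
  linarith

theorem abs_deriv_le_of_abs_deriv2_le {b : ℝ → ℝ} {U : ℝ} (hb' : Differentiable ℝ (deriv b))
    (hU : ∀ z, |deriv (deriv b) z| ≤ U) (x : ℝ) : |deriv b x| ≤ |deriv b 0| + U * |x| := by
  have hlip : |deriv b x - deriv b 0| ≤ U * |x| := by
    simpa using Convex.norm_image_sub_le_of_norm_deriv_le (fun z _ => hb' z) (fun z _ => hU z)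
      convex_univ (Set.mem_univ 0) (Set.mem_univ x)
  linarith [abs_sub_abs_le_abs_sub (deriv b x) (deriv b 0)]

theorem one_le_log_of_three_le {x : ℝ} (hx : 3 ≤ x) : 1 ≤ Real.log x := by
  rw [Real.le_log_iff_exp_le (by linarith)]
  linarith [Real.exp_one_lt_d9]

theorem sum_sub_sq_le {ι : Type*} [Fintype ι] (r : ι → ℝ) (c : ℝ) :
    ∑ s, (r s - c) ^ 2 ≤ 2 * ∑ s, r s ^ 2 + 2 * Fintype.card ι * c ^ 2 := by
  calc ∑ s, (r s - c) ^ 2 ≤ ∑ s, (2 * r s ^ 2 + 2 * c ^ 2) :=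
        sum_le_sum fun s _ => by linarith [sq_nonneg (r s + c)]
    _ = _ := by rw [sum_add_distrib, ← mul_sum, sum_const, card_univ, nsmul_eq_mul]; ring

theorem mul_sum_sq_le_of_quadratic_minorant {ι : Type*} [Fintype ι] {φ : ℝ → ℝ}
    {c₀ c₁ L K : ℝ} (hL : 0 < L) (hφ : ∀ y, c₀ + c₁ * y + L / 2 * y ^ 2 ≤ φ y) (f r : ι → ℝ)
    (hK : ∑ s, (φ (f s) - r s * f s) ≤ K) :
    L * ∑ s, f s ^ 2 ≤ 4 * (K - Fintype.card ι * c₀ + (∑ s, (r s - c₁) ^ 2) / L) := by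
  set Q := ∑ s, f s ^ 2
  set R := ∑ s, (r s - c₁) ^ 2
  set X := ∑ s, (r s - c₁) * f s
  have hmin : L / 2 * Q ≤ K - Fintype.card ι * c₀ + X := by
    have := sum_le_sum fun s (_ : s ∈ univ) =>
      show L / 2 * f s ^ 2 ≤ (φ (f s) - r s * f s) - c₀ + (r s - c₁) * f s by linarith [hφ (f s)]
    rw [← mul_sum, sum_add_distrib, sum_sub_distrib, sum_const, card_univ, nsmul_eq_mul] at this
    linarith
  have hCS : X ^ 2 ≤ R * Q := sum_mul_sq_le_sq_mul_sq _ _ _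
  have hX : X ≤ R / L + L / 4 * Q := by
    have hQ : 0 ≤ Q := sum_nonneg fun s _ => sq_nonneg _
    have hR : 0 ≤ R := sum_nonneg fun s _ => sq_nonneg _
    have hAMGM : (R / L + L / 4 * Q) ^ 2 = (R / L - L / 4 * Q) ^ 2 + R * Q := by
      field_simp; ring
    exact le_of_sq_le_sq (by nlinarith [sq_nonneg (R / L - L / 4 * Q)]) (by positivity)
  linarith

theorem sum_sq_le_of_loss_le {ι : Type*} [Fintype ι] {b : ℝ → ℝ} {L A₁ A₃ ℓ : ℝ} (hL : 0 < L)
    (hA₁ : 0 ≤ A₁) (hb : Differentiable ℝ b) (hb' : Differentiable ℝ (deriv b))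
    (hbL : ∀ z, L ≤ deriv (deriv b) z) (hℓ : 1 ≤ ℓ) (f r : ι → ℝ)
    (h₁ : ∑ s, (b (f s) - r s * f s) ≤ A₁ * Fintype.card ι * √ℓ)
    (h₃ : ∑ s, r s ^ 2 ≤ A₃ * Fintype.card ι * ℓ) :
    ∑ s, f s ^ 2 ≤
      4 * (A₁ + |b 0| + (2 * A₃ + 2 * deriv b 0 ^ 2) / L) / L * (Fintype.card ι * ℓ) := by
  set n : ℝ := (Fintype.card ι : ℝ)
  have hn : 0 ≤ n := Nat.cast_nonneg _
  have hφ (y : ℝ) : b 0 + deriv b 0 * y + L / 2 * y ^ 2 ≤ b y := by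
    simpa using quadratic_minorant_of_le_deriv2 hb hb' hbL 0 y
  have hQ := mul_sum_sq_le_of_quadratic_minorant hL hφ f r h₁
  have hsqrt : √ℓ ≤ ℓ := Real.sqrt_le_left (by linarith) |>.mpr (by nlinarith)
  have hA₁ℓ : A₁ * n * √ℓ ≤ A₁ * (n * ℓ) := by
    rw [mul_assoc]; gcongr
  have hconst : -(n * b 0) ≤ |b 0| * (n * ℓ) := by
    nlinarith [neg_abs_le (b 0), abs_nonneg (b 0), mul_nonneg hn (sub_nonneg.mpr hℓ)]
  have hR : ∑ s, (r s - deriv b 0) ^ 2 ≤ (2 * A₃ + 2 * deriv b 0 ^ 2) * (n * ℓ) := by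
    nlinarith [sum_sub_sq_le r (deriv b 0), mul_nonneg (mul_nonneg hn (sq_nonneg (deriv b 0)))
      (sub_nonneg.mpr hℓ)]
  rw [div_mul_eq_mul_div, le_div_iff₀ hL, mul_comm]
  calc L * ∑ s, f s ^ 2
      ≤ 4 * (A₁ * n * √ℓ - n * b 0 + (∑ s, (r s - deriv b 0) ^ 2) / L) := hQ
    _ ≤ 4 * (A₁ * (n * ℓ) + |b 0| * (n * ℓ) + (2 * A₃ + 2 * deriv b 0 ^ 2) * (n * ℓ) / L) := by
        linarith [div_le_div_of_nonneg_right hR hL.le]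
    _ = _ := by ring

theorem sum_abs_le_of_sum_sq_le {ι : Type*} [Fintype ι] {C ℓ : ℝ} (hC : 0 ≤ C) (hℓ : 0 ≤ ℓ)
    (f : ι → ℝ) (h : ∑ s, f s ^ 2 ≤ C * (Fintype.card ι * ℓ)) :
    ∑ s, |f s| ≤ √C * Fintype.card ι * √ℓ := by
  set n : ℝ := (Fintype.card ι : ℝ)
  refine le_of_sq_le_sq ?_ (by positivity)
  calc (∑ s, |f s|) ^ 2 ≤ n * ∑ s, f s ^ 2 := by
        simpa using sq_sum_le_card_mul_sum_sq (s := univ) (f := fun s => |f s|)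
    _ ≤ n * (C * (n * ℓ)) := by gcongr
    _ = (√C * n * √ℓ) ^ 2 := by rw [mul_pow, mul_pow, Real.sq_sqrt hC, Real.sq_sqrt hℓ]; ring

theorem stmt6_general (b0 db0 Lb Ub A₁ A₂ A₃ : ℝ) (hLb : 0 < Lb) (hLU : Lb ≤ Ub)
    (hA₁ : 0 ≤ A₁) (hA₃ : 0 ≤ A₃) :
    ∃ E : ℝ, 0 < E ∧
      ∀ b : ℝ → ℝ, Differentiable ℝ b → Differentiable ℝ (deriv b) →
        (∀ z : ℝ, Lb ≤ deriv (deriv b) z) → (∀ z : ℝ, deriv (deriv b) z ≤ Ub) →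
        b 0 = b0 → deriv b 0 = db0 →
        ∀ t : ℕ, 3 ≤ t → ∀ f r : Fin t → ℝ,
          (∑ s, (b (f s) - r s * f s) ≤ A₁ * (t : ℝ) * Real.sqrt (Real.log (t : ℝ))) →
          (|∑ s, r s| ≤ A₂ * (t : ℝ) * Real.sqrt (Real.log (t : ℝ))) →
          (∑ s, (r s) ^ 2 ≤ A₃ * (t : ℝ) * Real.log (t : ℝ)) →
          ∑ s, |deriv b (f s)| ≤ E * (t : ℝ) * Real.sqrt (Real.log (t : ℝ)) := by
  have hUb : 0 ≤ Ub := hLb.le.trans hLU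
  set C := 4 * (A₁ + |b0| + (2 * A₃ + 2 * db0 ^ 2) / Lb) / Lb
  have hC : 0 ≤ C := by positivity
  refine ⟨|db0| + Ub * √C + 1, by positivity, ?_⟩
  intro b hb hb' hbL hbU hb0 hdb0 t ht f r h₁ _ h₃
  have hℓ : 1 ≤ Real.log t := one_le_log_of_three_le (by exact_mod_cast ht)
  have hQ : ∑ s, f s ^ 2 ≤ C * (t * Real.log t) := by
    simpa [hb0, hdb0] using sum_sq_le_of_loss_le hLb hA₁ hb hb' hbL hℓ f r
      (by simpa using h₁) (by simpa using h₃)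
  have hS : ∑ s, |f s| ≤ √C * t * √(Real.log t) := by
    simpa using sum_abs_le_of_sum_sq_le hC (by linarith) f (by simpa using hQ)
  have hD (x : ℝ) : |deriv b x| ≤ |db0| + Ub * |x| := hdb0 ▸
    abs_deriv_le_of_abs_deriv2_le hb' (fun z => abs_le.mpr ⟨by linarith [hbL z], hbU z⟩) x
  have hsqrtℓ : 1 ≤ √(Real.log t) := Real.one_le_sqrt.mpr hℓ
  calc ∑ s, |deriv b (f s)| ≤ ∑ s, (|db0| + Ub * |f s|) := sum_le_sum fun s _ => hD (f s)
    _ = t * |db0| + Ub * ∑ s, |f s| := by simp [sum_add_distrib, mul_sum]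
    _ ≤ (|db0| + Ub * √C + 1) * t * √(Real.log t) := by
        have htℓ : 0 ≤ t * √(Real.log t) := by positivity
        have hdb0ℓ : t * |db0| ≤ |db0| * t * √(Real.log t) := by
          nlinarith [mul_le_mul_of_nonneg_left hsqrtℓ (by positivity : (0 : ℝ) ≤ t * |db0|)]
        nlinarith [mul_le_mul_of_nonneg_left hS hUb]

/-- a bound ∑ |b'(f_s)| ≤ E·t·√(log t) with a constant E depending only on
b(0), b'(0), L_b, U_b, A₁, A₂, A₃, valid whenever the surrogate negative log-likelihood is
at most A₁·t·√(log t), |∑ r_s| ≤ A₂·t·√(log t) and ∑ r_s² ≤ A₃·t·log t. -/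
theorem stmt6 (b0 db0 Lb Ub A₁ A₂ A₃ : ℝ) (hLb : 0 < Lb) (hLU : Lb ≤ Ub)
    (hA₁ : 0 ≤ A₁) (hA₂ : 0 ≤ A₂) (hA₃ : 0 ≤ A₃) :
    ∃ E : ℝ, 0 < E ∧
      ∀ b : ℝ → ℝ, Differentiable ℝ b → Differentiable ℝ (deriv b) →
        (∀ z : ℝ, Lb ≤ deriv (deriv b) z) → (∀ z : ℝ, deriv (deriv b) z ≤ Ub) →
        b 0 = b0 → deriv b 0 = db0 →
        ∀ t : ℕ, 3 ≤ t → ∀ f r : Fin t → ℝ,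
          (∑ s, (b (f s) - r s * f s) ≤ A₁ * (t : ℝ) * Real.sqrt (Real.log (t : ℝ))) →
          (|∑ s, r s| ≤ A₂ * (t : ℝ) * Real.sqrt (Real.log (t : ℝ))) →
          (∑ s, (r s) ^ 2 ≤ A₃ * (t : ℝ) * Real.log (t : ℝ)) →
          ∑ s, |deriv b (f s)| ≤ E * (t : ℝ) * Real.sqrt (Real.log (t : ℝ)) :=
  stmt6_general b0 db0 Lb Ub A₁ A₂ A₃ hLb hLU hA₁ hA₃
end

section
/- Fix integers p ≥ 1 and n ≥ 1, a point θ₀ ∈ ℝ^p, vectors g_1,…,g_n ∈ ℝ^p, rewards r_1,…,r_n ∈ ℝ, and reals λ > 0, m > 0. Let b : ℝ → ℝ be twice differentiable with constants 0 < L_b ≤ 1 ≤ U_b satisfying L_b ≤ b''(z) ≤ U_b for all z ∈ ℝ. Define ℓ_λ(θ) := ∑_{s=1}^n ( r_s·⟨g_s, θ − θ₀⟩ − b(⟨g_s, θ − θ₀⟩) ) − (m·λ/2)·‖θ − θ₀‖₂² and Z̄ := λ·I + (1/m)·∑_{s=1}^n g_s g_sᵀ. Let α ≥ 0 and g_a ∈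 ℝ^p, let θ̂ be a global maximizer of ℓ_λ over ℝ^p, and let θ_a be a global maximizer of θ ↦ ℓ_λ(θ) + α·⟨g_a, θ − θ₀⟩ over ℝ^p. Then ‖θ̂ − θ_a‖_{Z̄} ≤ ( α / (m·L_b) ) · ‖g_a‖_{Z̄⁻¹}. -/
open Matrix

/-- The regularized exponential-family surrogate log-likelihood
ℓ_λ(θ) = ∑_s ( r_s·⟨g_s, θ−θ₀⟩ − b(⟨g_s, θ−θ₀⟩) ) − (mλ/2)·‖θ−θ₀‖₂². -/
noncomputable def ellLam {p n : ℕ} (θ₀ : Fin p → ℝ) (g : Fin n → Fin p → ℝ)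
    (r : Fin n → ℝ) (b : ℝ → ℝ) (lam m : ℝ) (θ : Fin p → ℝ) : ℝ :=
  (∑ s, (r s * (g s ⬝ᵥ (θ - θ₀)) - b (g s ⬝ᵥ (θ - θ₀))))
    - m * lam / 2 * (∑ i, (θ i - θ₀ i) ^ 2)

/-- The regularized Gram matrix Z̄ = λ·I + (1/m)·∑_s g_s g_sᵀ. -/
noncomputable def gramMat {p n : ℕ} (g : Fin n → Fin p → ℝ) (lam m : ℝ) :
    Matrix (Fin p) (Fin p) ℝ :=
  lam • (1 : Matrix (Fin p) (Fin p) ℝ) + (1 / m) • ∑ s, vecMulVec (g s) (g s)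

/-- The M-weighted norm ‖v‖_M = √(vᵀ M v). -/
noncomputable def matNorm {p : ℕ} (M : Matrix (Fin p) (Fin p) ℝ) (v : Fin p → ℝ) : ℝ :=
  Real.sqrt (v ⬝ᵥ M.mulVec v)

/-! Because `b'' ≥ L_b` and `L_b ≤ 1`, the function `ℓ_λ` is `m L_b`-strongly concave for the norm
`‖·‖_{Z̄}`: along every segment its concavity defect dominates that of `(m L_b / 2) ‖·‖²_{Z̄}`.
Hence, if `x` maximizes `F = ℓ_λ + ⟨w, · - θ₀⟩`, then `F y + (m L_b / 2) ‖x - y‖²_{Z̄} ≤ F x` for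
every `y`. Adding this for `θ̂` (with `w = 0`) and for `θ_a` (with `w = α g_a`), the likelihood
terms cancel and `m L_b ‖θ̂ - θ_a‖²_{Z̄} ≤ α ⟨g_a, θ_a - θ̂⟩ ≤ α ‖g_a‖_{Z̄⁻¹} ‖θ̂ - θ_a‖_{Z̄}` by
Cauchy–Schwarz for the inner product defined by `Z̄`. -/

theorem strongConvexOn_univ_of_le_deriv2 {f : ℝ → ℝ} {L : ℝ} (hf : Differentiable ℝ f)
    (hf' : Differentiable ℝ (deriv f)) (hL : ∀ x, L ≤ deriv (deriv f) x) :
    StrongConvexOn Set.univ L f := by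
  rw [strongConvexOn_iff_convex]
  simp only [Real.norm_eq_abs, sq_abs]
  refine convexOn_of_hasDerivWithinAt2_nonneg convex_univ
    (f' := fun x => deriv f x - L * x) (f'' := fun x => deriv (deriv f) x - L)
    (hf.continuous.sub (by fun_prop)).continuousOn (fun x _ => ?_) (fun x _ => ?_)
    (fun x _ => sub_nonneg.2 (hL x))
  · exact (((hf x).hasDerivAt.sub ((hasDerivAt_pow 2 x).const_mul (L / 2))).congr_deriv
      (by push_cast; ring)).hasDerivWithinAt
  · exact ((hf' x).hasDerivAt.sub ((hasDerivAt_id x).const_mul L)).hasDerivWithinAt.congr_deriv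
      (by simp)

theorem StrongConvexOn.apply_add_le {f : ℝ → ℝ} {L : ℝ} (hf : StrongConvexOn Set.univ L f)
    {s t : ℝ} (hs : 0 ≤ s) (ht : 0 ≤ t) (hst : s + t = 1) (a c : ℝ) :
    f (s * a + t * c) ≤ s * f a + t * f c - L / 2 * s * t * (a - c) ^ 2 := by
  have := hf.2 (Set.mem_univ a) (Set.mem_univ c) hs ht hst
  simp only [smul_eq_mul, Real.norm_eq_abs, sq_abs] at this
  linarith

theorem add_le_of_forall_le_of_segment_concave {E : Type*} [AddCommGroup E] [Module ℝ E]
    {F : E → ℝ} {x y : E} {c : ℝ} (hx : ∀ z, F z ≤ F x)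
    (hF : ∀ t ∈ Set.Ioo (0 : ℝ) 1,
      (1 - t) * F x + t * F y + (1 - t) * t * c ≤ F ((1 - t) • x + t • y)) :
    F y + c ≤ F x := by
  have hseg : ∀ t ∈ Set.Ioo (0 : ℝ) 1, F y + (1 - t) * c ≤ F x := fun t ht => by
    have := (hF t ht).trans (hx _)
    exact le_of_mul_le_mul_left (by linarith) ht.1
  have hlim : Filter.Tendsto (fun t : ℝ => F y + (1 - t) * c) (nhdsWithin 0 (Set.Ioi 0))
      (nhds (F y + c)) :=
    tendsto_nhdsWithin_of_tendsto_nhds (by simpa using (Continuous.tendsto (by fun_prop) 0 :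
      Filter.Tendsto (fun t : ℝ => F y + (1 - t) * c) _ _))
  exact le_of_tendsto hlim (Filter.eventually_of_mem (Ioo_mem_nhdsGT one_pos) hseg)

theorem le_div_mul_of_mul_mul_self_le {a c T N : ℝ} (hc : 0 < c) (ha : 0 ≤ a) (hT : 0 ≤ T)
    (hN : 0 ≤ N) (h : c * N * N ≤ a * T * N) : N ≤ a / c * T := by
  rw [div_mul_eq_mul_div, le_div_iff₀ hc, mul_comm N]
  rcases hN.eq_or_lt with rfl | hN
  · simpa using mul_nonneg ha hT
  · exact le_of_mul_le_mul_right h hN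

theorem sq_matNorm {p : ℕ} {M : Matrix (Fin p) (Fin p) ℝ} (hM : M.PosSemidef) (v : Fin p → ℝ) :
    matNorm M v ^ 2 = v ⬝ᵥ M *ᵥ v :=
  Real.sq_sqrt (by simpa using hM.dotProduct_mulVec_nonneg v)

theorem matNorm_sub_comm {p : ℕ} (M : Matrix (Fin p) (Fin p) ℝ) (u v : Fin p → ℝ) :
    matNorm M (u - v) = matNorm M (v - u) := by
  rw [matNorm, matNorm, ← neg_sub, mulVec_neg, neg_dotProduct, dotProduct_neg, neg_neg]

theorem dotProduct_le_matNorm_inv_mul_matNorm {p : ℕ} {M : Matrix (Fin p) (Fin p) ℝ}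
    (hM : M.PosDef) (u v : Fin p → ℝ) : u ⬝ᵥ v ≤ matNorm M⁻¹ u * matNorm M v := by
  have hu : M *ᵥ (M⁻¹ *ᵥ u) = u := by
    rw [mulVec_mulVec, mul_nonsing_inv _ ((isUnit_iff_isUnit_det M).1 hM.isUnit), one_mulVec]
  -- Cauchy–Schwarz for the inner product `⟪x, y⟫ = (M *ᵥ y) ⬝ᵥ x` that `M` induces.
  have hcs := @real_inner_le_norm _ (M.toSeminormedAddCommGroup hM.posSemidef)
    (M.toInnerProductSpace hM.posSemidef) v (M⁻¹ *ᵥ u)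
  change (M *ᵥ (M⁻¹ *ᵥ u)) ⬝ᵥ v ≤ √((M *ᵥ v) ⬝ᵥ v) * √((M *ᵥ (M⁻¹ *ᵥ u)) ⬝ᵥ (M⁻¹ *ᵥ u)) at hcs
  rw [hu, mul_comm] at hcs
  rwa [matNorm, matNorm, dotProduct_comm v]

theorem dotProduct_gramMat_mulVec_self {p n : ℕ} (g : Fin n → Fin p → ℝ) (lam m : ℝ)
    (v : Fin p → ℝ) :
    v ⬝ᵥ gramMat g lam m *ᵥ v = lam * ∑ i, v i ^ 2 + 1 / m * ∑ s, (g s ⬝ᵥ v) ^ 2 := by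
  simp only [gramMat, add_mulVec, smul_mulVec, one_mulVec, sum_mulVec, vecMulVec_mulVec,
    dotProduct_add, dotProduct_smul, dotProduct_sum, smul_eq_mul]
  simp only [op_smul_eq_smul, smul_eq_mul, dotProduct_comm v, sq]
  rfl

theorem gramMat_posDef {p n : ℕ} (g : Fin n → Fin p → ℝ) {lam m : ℝ} (hlam : 0 < lam)
    (hm : 0 < m) : (gramMat g lam m).PosDef :=
  (PosDef.one.smul hlam).add_posSemidef <| (posSemidef_sum _ fun s _ => by
    simpa using posSemidef_vecMulVec_self_star (g s)).smul (by positivity)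

theorem ellLam_strongConcave {p n : ℕ} (θ₀ : Fin p → ℝ) (g : Fin n → Fin p → ℝ)
    (r : Fin n → ℝ) {b : ℝ → ℝ} {lam m Lb : ℝ} (hlam : 0 < lam) (hm : 0 < m)
    (hLb1 : Lb ≤ 1) (hb : StrongConvexOn Set.univ Lb b) {s t : ℝ} (hs : 0 ≤ s) (ht : 0 ≤ t)
    (hst : s + t = 1) (x y : Fin p → ℝ) :
    s * ellLam θ₀ g r b lam m x + t * ellLam θ₀ g r b lam m y
        + m * Lb / 2 * s * t * ((x - y) ⬝ᵥ gramMat g lam m *ᵥ (x - y))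
      ≤ ellLam θ₀ g r b lam m (s • x + t • y) := by
  have hz (v : Fin p → ℝ) :
      v ⬝ᵥ (s • x + t • y - θ₀) = s * (v ⬝ᵥ (x - θ₀)) + t * (v ⬝ᵥ (y - θ₀)) := by
    rw [show s • x + t • y - θ₀ = s • (x - θ₀) + t • (y - θ₀) by
      linear_combination (norm := module) hst • θ₀]
    simp only [dotProduct_add, dotProduct_smul, smul_eq_mul]
  have hterm (k : Fin n) :
      s * (r k * (g k ⬝ᵥ (x - θ₀)) - b (g k ⬝ᵥ (x - θ₀)))
        + t * (r k * (g k ⬝ᵥ (y - θ₀)) - b (g k ⬝ᵥ (y - θ₀)))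
        + Lb / 2 * s * t * (g k ⬝ᵥ (x - y)) ^ 2
      ≤ r k * (g k ⬝ᵥ (s • x + t • y - θ₀)) - b (g k ⬝ᵥ (s • x + t • y - θ₀)) := by
    have := hb.apply_add_le hs ht hst (g k ⬝ᵥ (x - θ₀)) (g k ⬝ᵥ (y - θ₀))
    rw [← dotProduct_sub, sub_sub_sub_cancel_right] at this
    rw [hz]
    linarith
  have hridge (i : Fin p) : ((s • x + t • y) i - θ₀ i) ^ 2
      = s * (x i - θ₀ i) ^ 2 + t * (y i - θ₀ i) ^ 2 - s * t * (x - y) i ^ 2 := by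
    obtain rfl : t = 1 - s := by linarith
    simp only [Pi.add_apply, Pi.smul_apply, Pi.sub_apply, smul_eq_mul]
    ring
  -- `Lb ≤ 1`: the ridge penalty alone covers the `λ I` part of the modulus `m Lb Z̄`.
  have hslack : 0 ≤ m * lam * (1 - Lb) * s * t * ∑ i, (x - y) i ^ 2 := by
    have := Finset.sum_nonneg fun i (_ : i ∈ Finset.univ) => sq_nonneg ((x - y) i)
    have : 0 ≤ 1 - Lb := by linarith
    positivity
  simp only [ellLam, Finset.sum_congr rfl fun i _ => hridge i, dotProduct_gramMat_mulVec_self]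
  have hsum := Finset.sum_le_sum fun k (_ : k ∈ Finset.univ) => hterm k
  have hscale :
      m * Lb / 2 * s * t * (lam * ∑ i, (x - y) i ^ 2 + 1 / m * ∑ k, (g k ⬝ᵥ (x - y)) ^ 2)
        = Lb / 2 * s * t * ∑ k, (g k ⬝ᵥ (x - y)) ^ 2
          + m * lam * Lb / 2 * s * t * ∑ i, (x - y) i ^ 2 := by
    field_simp
    ring
  rw [hscale]
  simp only [Finset.sum_sub_distrib, Finset.sum_add_distrib, ← Finset.mul_sum] at hsum ⊢
  linarith

theorem ellLam_add_dotProduct_add_le_of_forall_le {p n : ℕ} (θ₀ : Fin p → ℝ)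
    (g : Fin n → Fin p → ℝ) (r : Fin n → ℝ) {b : ℝ → ℝ} {lam m Lb : ℝ} (hlam : 0 < lam)
    (hm : 0 < m) (hLb1 : Lb ≤ 1) (hb : StrongConvexOn Set.univ Lb b) (w x : Fin p → ℝ)
    (hx : ∀ θ, ellLam θ₀ g r b lam m θ + w ⬝ᵥ (θ - θ₀) ≤ ellLam θ₀ g r b lam m x + w ⬝ᵥ (x - θ₀))
    (y : Fin p → ℝ) :
    ellLam θ₀ g r b lam m y + w ⬝ᵥ (y - θ₀) + m * Lb / 2 * matNorm (gramMat g lam m) (x - y) ^ 2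
      ≤ ellLam θ₀ g r b lam m x + w ⬝ᵥ (x - θ₀) := by
  rw [sq_matNorm (gramMat_posDef g hlam hm).posSemidef]
  refine add_le_of_forall_le_of_segment_concave
    (F := fun θ => ellLam θ₀ g r b lam m θ + w ⬝ᵥ (θ - θ₀)) hx fun t ht => ?_
  have hconc := ellLam_strongConcave θ₀ g r hlam hm hLb1 hb (sub_nonneg.2 ht.2.le) ht.1.le
    (sub_add_cancel 1 t) x y
  have hlin : w ⬝ᵥ ((1 - t) • x + t • y - θ₀)
      = (1 - t) * (w ⬝ᵥ (x - θ₀)) + t * (w ⬝ᵥ (y - θ₀)) := by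
    simp only [dotProduct_sub, dotProduct_add, dotProduct_smul, smul_eq_mul]
    ring
  simp only [hlin]
  linarith

theorem stmt7_general {p n : ℕ}
    (θ₀ : Fin p → ℝ) (g : Fin n → Fin p → ℝ) (r : Fin n → ℝ)
    (lam m : ℝ) (hlam : 0 < lam) (hm : 0 < m)
    (b : ℝ → ℝ) (Lb : ℝ) (hLb : 0 < Lb) (hLb1 : Lb ≤ 1)
    (hb : Differentiable ℝ b) (hb' : Differentiable ℝ (deriv b))
    (hlow : ∀ z : ℝ, Lb ≤ deriv (deriv b) z)
    (α : ℝ) (hα : 0 ≤ α) (ga : Fin p → ℝ)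
    (θhat : Fin p → ℝ)
    (hθhat : ∀ θ : Fin p → ℝ, ellLam θ₀ g r b lam m θ ≤ ellLam θ₀ g r b lam m θhat)
    (θa : Fin p → ℝ)
    (hθa : ∀ θ : Fin p → ℝ, ellLam θ₀ g r b lam m θ + α * (ga ⬝ᵥ (θ - θ₀)) ≤
        ellLam θ₀ g r b lam m θa + α * (ga ⬝ᵥ (θa - θ₀))) :
    matNorm (gramMat g lam m) (θhat - θa) ≤
      α / (m * Lb) * matNorm (gramMat g lam m)⁻¹ ga := by
  have hbconv := strongConvexOn_univ_of_le_deriv2 hb hb' hlow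
  have hhat := ellLam_add_dotProduct_add_le_of_forall_le θ₀ g r hlam hm hLb1 hbconv 0 θhat
    (by simpa using hθhat) θa
  have ha := ellLam_add_dotProduct_add_le_of_forall_le θ₀ g r hlam hm hLb1 hbconv (α • ga) θa
    (by simpa only [smul_dotProduct, smul_eq_mul] using hθa) θhat
  have hcs := dotProduct_le_matNorm_inv_mul_matNorm (gramMat_posDef g hlam hm) ga (θa - θhat)
  rw [matNorm_sub_comm] at ha hcs
  simp only [zero_dotProduct, add_zero, smul_dotProduct, smul_eq_mul] at hhat ha
  set N := matNorm (gramMat g lam m) (θhat - θa)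
  set T := matNorm (gramMat g lam m)⁻¹ ga
  have hdiff : ga ⬝ᵥ (θa - θhat) = ga ⬝ᵥ (θa - θ₀) - ga ⬝ᵥ (θhat - θ₀) := by
    rw [← dotProduct_sub, sub_sub_sub_cancel_right]
  refine le_div_mul_of_mul_mul_self_le (by positivity) hα (Real.sqrt_nonneg _)
    (Real.sqrt_nonneg _) ?_
  calc m * Lb * N * N ≤ α * (ga ⬝ᵥ (θa - θhat)) := by rw [hdiff]; linarith
    _ ≤ α * (T * N) := mul_le_mul_of_nonneg_left hcs hα
    _ = α * T * N := by ring

/-- ‖θ̂ − θ_a‖_{Z̄} ≤ (α/(m·L_b))·‖g_a‖_{Z̄⁻¹}, where θ̂ maximizes ℓ_λ and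
θ_a maximizes the reward-biased objective ℓ_λ(θ) + α·⟨g_a, θ − θ₀⟩. -/
theorem stmt7 {p n : ℕ} (hp : 1 ≤ p) (hn : 1 ≤ n)
    (θ₀ : Fin p → ℝ) (g : Fin n → Fin p → ℝ) (r : Fin n → ℝ)
    (lam m : ℝ) (hlam : 0 < lam) (hm : 0 < m)
    (b : ℝ → ℝ) (Lb Ub : ℝ) (hLb : 0 < Lb) (hLb1 : Lb ≤ 1) (hUb : 1 ≤ Ub)
    (hb : Differentiable ℝ b) (hb' : Differentiable ℝ (deriv b))
    (hlow : ∀ z : ℝ, Lb ≤ deriv (deriv b) z) (hup : ∀ z : ℝ, deriv (deriv b) z ≤ Ub)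
    (α : ℝ) (hα : 0 ≤ α) (ga : Fin p → ℝ)
    (θhat : Fin p → ℝ)
    (hθhat : ∀ θ : Fin p → ℝ, ellLam θ₀ g r b lam m θ ≤ ellLam θ₀ g r b lam m θhat)
    (θa : Fin p → ℝ)
    (hθa : ∀ θ : Fin p → ℝ, ellLam θ₀ g r b lam m θ + α * (ga ⬝ᵥ (θ - θ₀)) ≤
        ellLam θ₀ g r b lam m θa + α * (ga ⬝ᵥ (θa - θ₀))) :
    matNorm (gramMat g lam m) (θhat - θa) ≤
      α / (m * Lb) * matNorm (gramMat g lam m)⁻¹ ga :=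
  stmt7_general θ₀ g r lam m hlam hm b Lb hLb hLb1 hb hb' hlow α hα ga θhat hθhat θa hθa
end

section
/- Fix integers p ≥ 1 and n ≥ 1, a point θ₀ ∈ ℝ^p, vectors g_1,…,g_n ∈ ℝ^p, rewards r_1,…,r_n ∈ ℝ, and reals λ > 0, m > 0. Let b : ℝ → ℝ be twice differentiable with constants 0 < L_b ≤ U_b satisfying L_b ≤ b''(z) ≤ U_b for all z ∈ ℝ. Define ℓ_λ(θ) := ∑_{s=1}^n ( r_s·⟨g_s, θ − θ₀⟩ − b(⟨g_s, θ − θ₀⟩) ) − (m·λ/2)·‖θ − θ₀‖₂². Let α ≥ 0, let g_i, g_j ∈ ℝ^p, and let θ_i and θ_j be global maximizers over ℝ^p of θ ↦ ℓ_λ(θ) + α·⟨g_i, θ − θ₀⟩ and θ ↦ ℓ_λ(θ) + α·⟨g_j, θ − θ₀⟩ respectively. Then there exist real numbers ξ_1,…,ξ_n, with each ξ_s lying in the closed interval between ⟨g_s, θ_i − θ₀⟩ and ⟨g_s, θ_j − θ₀⟩, such that the matrix U := λ·I + (1/m)·∑_{s=1}^n b''(ξ_s)·g_s g_sᵀ is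 symmetric positive definite and 0 = (g_i + g_j)ᵀ (θ_j − θ_i) + (α/m)·( ‖g_i‖²_{U⁻¹} − ‖g_j‖²_{U⁻¹} ). -/
/-!
Each estimate satisfies the first-order condition `∇ℓ_λ(θ_a) + α g_a = 0`. Subtracting the two
conditions and applying the mean value theorem to `b'` along each `⟨g_s, ·⟩` turns
`∇ℓ_λ(θ_i) - ∇ℓ_λ(θ_j)` into `m U (θ_j - θ_i)`, where `U = λI + (1/m) ∑ b''(ξ_s) g_s g_sᵀ` is
positive definite because `b'' > 0`. Hence `θ_j - θ_i = (α/m) U⁻¹ (g_j - g_i)`, and pairing with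
`g_i + g_j` the cross terms `⟨g_i, U⁻¹ g_j⟩` cancel by symmetry of `U⁻¹`.
-/

open Matrix

theorem exists_mem_uIcc_sub_eq_deriv_mul {f : ℝ → ℝ} (hf : Differentiable ℝ f) (a b : ℝ) :
    ∃ c ∈ Set.uIcc a b, f b - f a = deriv f c * (b - a) := by
  wlog hab : a ≤ b generalizing a b
  · obtain ⟨c, hc, hfc⟩ := this b a (le_of_not_ge hab)
    exact ⟨c, Set.uIcc_comm a b ▸ hc, by linear_combination -hfc⟩
  rcases hab.eq_or_lt with rfl | hlt
  · exact ⟨a, Set.left_mem_uIcc, by simp⟩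
  obtain ⟨c, hc, hfc⟩ := exists_deriv_eq_slope f hlt hf.continuous.continuousOn hf.differentiableOn
  refine ⟨c, Set.Icc_subset_uIcc (Set.Ioo_subset_Icc_self hc), ?_⟩
  rw [hfc, div_mul_cancel₀ _ (sub_ne_zero.2 hlt.ne')]

namespace Matrix

variable {R ι : Type*} [CommRing R] [Fintype ι] [DecidableEq ι]

theorem IsSymm.add_dotProduct_eq_of_mulVec_eq_smul_sub {A : Matrix ι ι R} (hA : A.IsSymm)
    (hdet : IsUnit A.det) {x y d : ι → R} {c : R} (h : A *ᵥ d = c • (y - x)) :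
    (x + y) ⬝ᵥ d = c * (y ⬝ᵥ A⁻¹ *ᵥ y - x ⬝ᵥ A⁻¹ *ᵥ x) := by
  have hd : d = c • A⁻¹ *ᵥ (y - x) := by
    rw [← mulVec_smul, ← h, mulVec_mulVec, nonsing_inv_mul _ hdet, one_mulVec]
  have hsymm : x ⬝ᵥ A⁻¹ *ᵥ y = y ⬝ᵥ A⁻¹ *ᵥ x := by
    simpa only [hA.inv.eq] using dotProduct_transpose_mulVec A⁻¹ x y
  simp only [hd, dotProduct_smul, mulVec_sub, dotProduct_sub, add_dotProduct, smul_eq_mul]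
  linear_combination c * hsymm

end Matrix

section CurvatureMatrix

variable {ι κ : Type*} [Fintype ι] [DecidableEq ι] [Fintype κ]

noncomputable def curvatureMatrix (lam m : ℝ) (c : κ → ℝ) (g : κ → ι → ℝ) : Matrix ι ι ℝ :=
  lam • 1 + (1 / m) • ∑ s, c s • vecMulVec (g s) (g s)

theorem curvatureMatrix_mulVec (lam m : ℝ) (c : κ → ℝ) (g : κ → ι → ℝ) (x : ι → ℝ) :
    curvatureMatrix lam m c g *ᵥ x = lam • x + (1 / m) • ∑ s, (c s * (g s ⬝ᵥ x)) • g s := by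
  simp only [curvatureMatrix, add_mulVec, smul_mulVec, one_mulVec, Matrix.sum_mulVec,
    vecMulVec_mulVec, op_smul_eq_smul, smul_smul]

theorem curvatureMatrix_posDef {lam m : ℝ} {c : κ → ℝ} (hlam : 0 < lam) (hm : 0 < m)
    (hc : ∀ s, 0 ≤ c s) (g : κ → ι → ℝ) : (curvatureMatrix lam m c g).PosDef := by
  refine (PosDef.one.smul hlam).add_posSemidef (PosSemidef.smul ?_ (by positivity))
  refine posSemidef_sum _ fun s _ => PosSemidef.smul ?_ (hc s)
  simpa using posSemidef_vecMulVec_self_star (g s)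

end CurvatureMatrix

theorem hasDerivAt_dotProduct_add_smul_sub {ι : Type*} [Fintype ι] (w θ v θ₀ : ι → ℝ) (t : ℝ) :
    HasDerivAt (fun t : ℝ => w ⬝ᵥ (θ + t • v - θ₀)) (w ⬝ᵥ v) t := by
  have h : (fun t : ℝ => w ⬝ᵥ (θ + t • v - θ₀)) = fun t => w ⬝ᵥ (θ - θ₀) + t * (w ⬝ᵥ v) := by
    ext t
    simp only [dotProduct_sub, dotProduct_add, dotProduct_smul, smul_eq_mul]
    ring
  rw [h]
  simpa using ((hasDerivAt_id t).mul_const (w ⬝ᵥ v)).const_add (w ⬝ᵥ (θ - θ₀))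

noncomputable def gradEllLam {p n : ℕ} (θ₀ : Fin p → ℝ) (g : Fin n → Fin p → ℝ)
    (r : Fin n → ℝ) (b : ℝ → ℝ) (lam m : ℝ) (θ : Fin p → ℝ) : Fin p → ℝ :=
  ∑ s, (r s - deriv b (g s ⬝ᵥ (θ - θ₀))) • g s - (m * lam) • (θ - θ₀)

section Gradient

variable {p n : ℕ} (θ₀ : Fin p → ℝ) (g : Fin n → Fin p → ℝ) (r : Fin n → ℝ) (lam m : ℝ)
  {b : ℝ → ℝ}

theorem hasDerivAt_ellLam_add_smul (hb : Differentiable ℝ b) (θ v : Fin p → ℝ) :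
    HasDerivAt (fun t : ℝ => ellLam θ₀ g r b lam m (θ + t • v))
      (gradEllLam θ₀ g r b lam m θ ⬝ᵥ v) 0 := by
  have hdot (w : Fin p → ℝ) := hasDerivAt_dotProduct_add_smul_sub w θ v θ₀ 0
  have hsq : HasDerivAt (fun t : ℝ => ∑ i, ((θ + t • v) i - θ₀ i) ^ 2)
      (∑ i, 2 * (θ i - θ₀ i) * v i) 0 := by
    refine HasDerivAt.fun_sum fun i _ => ?_
    -- the `i`-th coordinate is the dot product with `Pi.single i 1`
    simpa using (hdot (Pi.single i 1)).fun_pow 2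
  have hloss : HasDerivAt
      (fun t : ℝ => ∑ s, (r s * (g s ⬝ᵥ (θ + t • v - θ₀)) - b (g s ⬝ᵥ (θ + t • v - θ₀))))
      (∑ s, (r s * (g s ⬝ᵥ v) - deriv b (g s ⬝ᵥ (θ - θ₀)) * (g s ⬝ᵥ v))) 0 := by
    refine HasDerivAt.fun_sum fun s _ => ?_
    have hbs := (hb (g s ⬝ᵥ (θ - θ₀))).hasDerivAt.comp_of_eq 0 (hdot (g s)) (by simp)
    exact ((hdot (g s)).const_mul (r s)).fun_sub hbs
  simp only [ellLam]
  refine (hloss.fun_sub (hsq.const_mul (m * lam / 2))).congr_deriv ?_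
  have hquad : m * lam / 2 * ∑ i, 2 * (θ i - θ₀ i) * v i = (m * lam) * ((θ - θ₀) ⬝ᵥ v) := by
    simp only [dotProduct, Pi.sub_apply, Finset.mul_sum]
    exact Finset.sum_congr rfl fun i _ => by ring
  simp only [gradEllLam, hquad, sub_dotProduct (∑ s, _), sum_dotProduct, smul_dotProduct,
    smul_eq_mul, sub_mul]

theorem gradEllLam_add_smul_eq_zero (hb : Differentiable ℝ b) {α : ℝ} {ga θa : Fin p → ℝ}
    (hθa : ∀ θ : Fin p → ℝ, ellLam θ₀ g r b lam m θ + α * (ga ⬝ᵥ (θ - θ₀)) ≤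
      ellLam θ₀ g r b lam m θa + α * (ga ⬝ᵥ (θa - θ₀))) :
    gradEllLam θ₀ g r b lam m θa + α • ga = 0 := by
  refine dotProduct_eq_zero _ fun v => ?_
  have hmax : IsLocalMax
      (fun t : ℝ => ellLam θ₀ g r b lam m (θa + t • v) + α * (ga ⬝ᵥ (θa + t • v - θ₀))) 0 :=
    Filter.Eventually.of_forall fun t => by simpa using hθa (θa + t • v)
  rw [add_dotProduct, smul_dotProduct, smul_eq_mul]
  exact hmax.hasDerivAt_eq_zero <| (hasDerivAt_ellLam_add_smul θ₀ g r lam m hb θa v).add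
    ((hasDerivAt_dotProduct_add_smul_sub ga θa v θ₀ 0).const_mul α)

theorem gradEllLam_sub_gradEllLam (hm : m ≠ 0) {θ θ' : Fin p → ℝ} {c : Fin n → ℝ}
    (hc : ∀ s, deriv b (g s ⬝ᵥ (θ' - θ₀)) - deriv b (g s ⬝ᵥ (θ - θ₀)) =
      c s * (g s ⬝ᵥ (θ' - θ₀) - g s ⬝ᵥ (θ - θ₀))) :
    gradEllLam θ₀ g r b lam m θ - gradEllLam θ₀ g r b lam m θ' =
      m • curvatureMatrix lam m c g *ᵥ (θ' - θ) := by
  have hsum : ∑ s, (r s - deriv b (g s ⬝ᵥ (θ - θ₀))) • g s -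
      ∑ s, (r s - deriv b (g s ⬝ᵥ (θ' - θ₀))) • g s = ∑ s, (c s * (g s ⬝ᵥ (θ' - θ))) • g s := by
    rw [← Finset.sum_sub_distrib]
    refine Finset.sum_congr rfl fun s _ => ?_
    rw [← sub_smul, sub_sub_sub_cancel_left, hc s, ← dotProduct_sub, sub_sub_sub_cancel_right]
  rw [curvatureMatrix_mulVec, smul_add, smul_smul, smul_smul, mul_one_div_cancel hm, one_smul,
    gradEllLam, gradEllLam, ← hsum]
  module

end Gradient

theorem stmt9_general {p n : ℕ}
    (θ₀ : Fin p → ℝ) (g : Fin n → Fin p → ℝ) (r : Fin n → ℝ)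
    (lam m : ℝ) (hlam : 0 < lam) (hm : 0 < m)
    (b : ℝ → ℝ) (Lb : ℝ) (hLb : 0 < Lb)
    (hb : Differentiable ℝ b) (hb' : Differentiable ℝ (deriv b))
    (hlow : ∀ z : ℝ, Lb ≤ deriv (deriv b) z)
    (α : ℝ) (gi gj : Fin p → ℝ)
    (θi : Fin p → ℝ)
    (hθi : ∀ θ : Fin p → ℝ, ellLam θ₀ g r b lam m θ + α * (gi ⬝ᵥ (θ - θ₀)) ≤
        ellLam θ₀ g r b lam m θi + α * (gi ⬝ᵥ (θi - θ₀)))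
    (θj : Fin p → ℝ)
    (hθj : ∀ θ : Fin p → ℝ, ellLam θ₀ g r b lam m θ + α * (gj ⬝ᵥ (θ - θ₀)) ≤
        ellLam θ₀ g r b lam m θj + α * (gj ⬝ᵥ (θj - θ₀))) :
    ∃ ξ : Fin n → ℝ,
      (∀ s : Fin n, ξ s ∈ Set.uIcc (g s ⬝ᵥ (θi - θ₀)) (g s ⬝ᵥ (θj - θ₀))) ∧
      (lam • (1 : Matrix (Fin p) (Fin p) ℝ) +
        (1 / m) • ∑ s, deriv (deriv b) (ξ s) • vecMulVec (g s) (g s)).PosDef ∧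
      0 = (gi + gj) ⬝ᵥ (θj - θi) + α / m *
        ((gi ⬝ᵥ (lam • (1 : Matrix (Fin p) (Fin p) ℝ) +
            (1 / m) • ∑ s, deriv (deriv b) (ξ s) • vecMulVec (g s) (g s))⁻¹.mulVec gi) -
         (gj ⬝ᵥ (lam • (1 : Matrix (Fin p) (Fin p) ℝ) +
            (1 / m) • ∑ s, deriv (deriv b) (ξ s) • vecMulVec (g s) (g s))⁻¹.mulVec gj)) := by
  choose ξ hξ hmvt using fun s =>
    exists_mem_uIcc_sub_eq_deriv_mul hb' (g s ⬝ᵥ (θi - θ₀)) (g s ⬝ᵥ (θj - θ₀))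
  have hU : (curvatureMatrix lam m (fun s => deriv (deriv b) (ξ s)) g).PosDef :=
    curvatureMatrix_posDef hlam hm (fun s => hLb.le.trans (hlow _)) g
  have hstep : curvatureMatrix lam m (fun s => deriv (deriv b) (ξ s)) g *ᵥ (θj - θi) =
      (α / m) • (gj - gi) := by
    have hgrad := gradEllLam_sub_gradEllLam θ₀ g r lam m hm.ne' hmvt
    rw [eq_neg_of_add_eq_zero_left (gradEllLam_add_smul_eq_zero θ₀ g r lam m hb hθi),
      eq_neg_of_add_eq_zero_left (gradEllLam_add_smul_eq_zero θ₀ g r lam m hb hθj)] at hgrad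
    rw [← inv_smul_smul₀ hm.ne' (curvatureMatrix _ _ _ _ *ᵥ _), ← hgrad]
    module
  have hsymm := isHermitian_iff_isSymm.mp hU.isHermitian
  refine ⟨ξ, hξ, hU, ?_⟩
  rw [hsymm.add_dotProduct_eq_of_mulVec_eq_smul_sub
    ((isUnit_iff_isUnit_det _).mp hU.isUnit) hstep, curvatureMatrix]
  ring

/-- comparing the first-order conditions of the two arm-specific RBMLE
estimates θ_i, θ_j yields intermediate points ξ_s (from the mean value theorem applied to
b') such that the curvature matrix U = λI + (1/m)∑_s b''(ξ_s) g_s g_sᵀ is symmetric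
positive definite and
0 = (g_i + g_j)ᵀ(θ_j − θ_i) + (α/m)·(‖g_i‖²_{U⁻¹} − ‖g_j‖²_{U⁻¹}). -/
theorem stmt9 {p n : ℕ} (hp : 1 ≤ p) (hn : 1 ≤ n)
    (θ₀ : Fin p → ℝ) (g : Fin n → Fin p → ℝ) (r : Fin n → ℝ)
    (lam m : ℝ) (hlam : 0 < lam) (hm : 0 < m)
    (b : ℝ → ℝ) (Lb Ub : ℝ) (hLb : 0 < Lb) (hLU : Lb ≤ Ub)
    (hb : Differentiable ℝ b) (hb' : Differentiable ℝ (deriv b))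
    (hlow : ∀ z : ℝ, Lb ≤ deriv (deriv b) z) (hup : ∀ z : ℝ, deriv (deriv b) z ≤ Ub)
    (α : ℝ) (hα : 0 ≤ α) (gi gj : Fin p → ℝ)
    (θi : Fin p → ℝ)
    (hθi : ∀ θ : Fin p → ℝ, ellLam θ₀ g r b lam m θ + α * (gi ⬝ᵥ (θ - θ₀)) ≤
        ellLam θ₀ g r b lam m θi + α * (gi ⬝ᵥ (θi - θ₀)))
    (θj : Fin p → ℝ)
    (hθj : ∀ θ : Fin p → ℝ, ellLam θ₀ g r b lam m θ + α * (gj ⬝ᵥ (θ - θ₀)) ≤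
        ellLam θ₀ g r b lam m θj + α * (gj ⬝ᵥ (θj - θ₀))) :
    ∃ ξ : Fin n → ℝ,
      (∀ s : Fin n, ξ s ∈ Set.uIcc (g s ⬝ᵥ (θi - θ₀)) (g s ⬝ᵥ (θj - θ₀))) ∧
      (lam • (1 : Matrix (Fin p) (Fin p) ℝ) +
        (1 / m) • ∑ s, deriv (deriv b) (ξ s) • vecMulVec (g s) (g s)).PosDef ∧
      0 = (gi + gj) ⬝ᵥ (θj - θi) + α / m *
        ((gi ⬝ᵥ (lam • (1 : Matrix (Fin p) (Fin p) ℝ) +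
            (1 / m) • ∑ s, deriv (deriv b) (ξ s) • vecMulVec (g s) (g s))⁻¹.mulVec gi) -
         (gj ⬝ᵥ (lam • (1 : Matrix (Fin p) (Fin p) ℝ) +
            (1 / m) • ∑ s, deriv (deriv b) (ξ s) • vecMulVec (g s) (g s))⁻¹.mulVec gj)) :=
  stmt9_general θ₀ g r lam m hlam hm b Lb hLb hb hb' hlow α gi gj θi hθi θj hθj
end

section
/- Fix integers p ≥ 1 and n ≥ 1, a point θ₀ ∈ ℝ^p, vectors g_1,…,g_n ∈ ℝ^p, rewards r_1,…,r_n ∈ ℝ, and reals λ > 0, m > 0. Let b : ℝ → ℝ be twice differentiable with constants 0 < L_b ≤ U_b satisfying L_b ≤ b''(z) ≤ U_b for all z ∈ ℝ, and let g : ℝ → ℝ satisfy b'(g(r)) = r for every r ∈ ℝ. Define ℓ_λ(θ) := ∑_{s=1}^n ( r_s·⟨g_s, θ − θ₀⟩ − b(⟨g_s, θ − θ₀⟩) ) − (m·λ/2)·‖θ − θ₀‖₂². Let α ≥ 0, g_a ∈ ℝ^p, and let θ_a be a global maximizer over ℝ^p of θ ↦ ℓ_λ(θ) + α·⟨g_a,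 θ − θ₀⟩. Then (m·λ/2)·‖θ_a − θ₀‖₂² ≤ n·b(0) − n·b( (1/n)·∑_{s=1}^n g(r_s) ) + ∑_{s=1}^n r_s·g(r_s) + α·‖g_a‖₂·‖θ_a − θ₀‖₂. -/
open Matrix

/-- The Euclidean norm ‖v‖₂ = √(∑ i, v i²) on Fin p → ℝ. -/
noncomputable def euclNorm {p : ℕ} (v : Fin p → ℝ) : ℝ :=
  Real.sqrt (∑ i, v i ^ 2)

-- tangent line inequality for a convex differentiable function
lemma tangent_le {b : ℝ → ℝ} (hconv : ConvexOn ℝ Set.univ b) (hb : Differentiable ℝ b)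
    (x y : ℝ) : b y + deriv b y * (x - y) ≤ b x := by
  rcases lt_trichotomy x y with h | h | h
  · have := hconv.slope_le_deriv (Set.mem_univ x) (Set.mem_univ y) h (hb y)
    rw [slope_def_field, div_le_iff₀ (by linarith)] at this
    nlinarith
  · simp [h]
  · have := hconv.deriv_le_slope (Set.mem_univ y) (Set.mem_univ x) h (hb y)
    rw [slope_def_field, le_div_iff₀ (by linarith)] at this
    nlinarith

/-- a bound on the regularization term at the RBMLE estimate θ_a:
(mλ/2)‖θ_a − θ₀‖₂² ≤ n·b(0) − n·b((1/n)∑ gInv(r_s)) + ∑ r_s·gInv(r_s) + α‖g_a‖₂‖θ_a − θ₀‖₂,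
where gInv is a right inverse of b'. -/
theorem stmt11 {p n : ℕ} (hp : 1 ≤ p) (hn : 1 ≤ n)
    (θ₀ : Fin p → ℝ) (g : Fin n → Fin p → ℝ) (r : Fin n → ℝ)
    (lam m : ℝ) (hlam : 0 < lam) (hm : 0 < m)
    (b : ℝ → ℝ) (Lb Ub : ℝ) (hLb : 0 < Lb) (hLU : Lb ≤ Ub)
    (hb : Differentiable ℝ b) (hb' : Differentiable ℝ (deriv b))
    (hlow : ∀ z : ℝ, Lb ≤ deriv (deriv b) z) (hup : ∀ z : ℝ, deriv (deriv b) z ≤ Ub)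
    (gInv : ℝ → ℝ) (hgInv : ∀ x : ℝ, deriv b (gInv x) = x)
    (α : ℝ) (hα : 0 ≤ α) (ga : Fin p → ℝ)
    (θa : Fin p → ℝ)
    (hθa : ∀ θ : Fin p → ℝ, ellLam θ₀ g r b lam m θ + α * (ga ⬝ᵥ (θ - θ₀)) ≤
        ellLam θ₀ g r b lam m θa + α * (ga ⬝ᵥ (θa - θ₀))) :
    m * lam / 2 * (∑ i, (θa i - θ₀ i) ^ 2) ≤
      (n : ℝ) * b 0 - (n : ℝ) * b ((1 / (n : ℝ)) * ∑ s, gInv (r s)) +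
        ∑ s, r s * gInv (r s) + α * euclNorm ga * euclNorm (θa - θ₀) := by
  have hconv : ConvexOn ℝ Set.univ b := by
    apply convexOn_univ_of_deriv2_nonneg hb hb'
    intro x
    have := hlow x
    simp only [Function.iterate_succ, Function.iterate_zero, Function.comp_apply, id]
    linarith
  have hnpos : (0:ℝ) < n := by exact_mod_cast hn
  -- step 1: use the maximizer property at θ₀
  have h0 := hθa θ₀
  have hell0 : ellLam θ₀ g r b lam m θ₀ = -((n:ℝ) * b 0) := by
    simp [ellLam, dotProduct]
  rw [hell0] at h0
  simp only [sub_self] at h0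
  -- h0 : -(n * b 0) + α * (ga ⬝ᵥ 0) ≤ ellLam ... θa + α * ...
  have hdot0 : (ga ⬝ᵥ (0 : Fin p → ℝ)) = 0 := by simp [dotProduct]
  -- step 2: each summand bound: r s * x - b x ≤ r s * gInv (r s) - b (gInv (r s))
  have hsummand : ∀ (s : Fin n) (x : ℝ),
      r s * x - b x ≤ r s * gInv (r s) - b (gInv (r s)) := by
    intro s x
    have := tangent_le hconv hb x (gInv (r s))
    rw [hgInv] at this
    nlinarith
  -- step 3: Jensen
  have hjensen : b ((1 / (n : ℝ)) * ∑ s, gInv (r s)) ≤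
      (1 / (n:ℝ)) * ∑ s, b (gInv (r s)) := by
    have := hconv.map_sum_le (t := Finset.univ) (w := fun _ : Fin n => 1 / (n:ℝ))
      (p := fun s => gInv (r s)) (fun _ _ => by positivity)
      (by simp [Finset.sum_const]; field_simp) (fun _ _ => Set.mem_univ _)
    simpa [Finset.mul_sum, Finset.sum_div] using this
  -- step 4: Cauchy-Schwarz
  have hCS : ga ⬝ᵥ (θa - θ₀) ≤ euclNorm ga * euclNorm (θa - θ₀) := by
    have h1 := Finset.sum_mul_sq_le_sq_mul_sq Finset.univ ga (fun i => θa i - θ₀ i)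
    have h2 : ga ⬝ᵥ (θa - θ₀) = ∑ i, ga i * (θa i - θ₀ i) := by
      simp [dotProduct]
    rw [h2]
    have h3 : euclNorm ga * euclNorm (θa - θ₀)
        = Real.sqrt ((∑ i, ga i ^ 2) * ∑ i, (θa i - θ₀ i) ^ 2) := by
      rw [euclNorm, euclNorm, ← Real.sqrt_mul (by positivity)]
      congr 1
    rw [h3]
    calc ∑ i, ga i * (θa i - θ₀ i) ≤ |∑ i, ga i * (θa i - θ₀ i)| := le_abs_self _
      _ = Real.sqrt ((∑ i, ga i * (θa i - θ₀ i))^2) := (Real.sqrt_sq_eq_abs _).symm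
      _ ≤ _ := Real.sqrt_le_sqrt h1
  -- combine
  have hsum : (∑ s, (r s * (g s ⬝ᵥ (θa - θ₀)) - b (g s ⬝ᵥ (θa - θ₀)))) ≤
      ∑ s, (r s * gInv (r s) - b (gInv (r s))) :=
    Finset.sum_le_sum fun s _ => hsummand s _
  have hb_sum : -(∑ s, b (gInv (r s))) ≤ -((n:ℝ) * b ((1 / (n : ℝ)) * ∑ s, gInv (r s))) := by
    rw [neg_le_neg_iff]
    calc (n:ℝ) * b ((1 / (n : ℝ)) * ∑ s, gInv (r s))
        ≤ (n:ℝ) * ((1 / (n:ℝ)) * ∑ s, b (gInv (r s))) :=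
          mul_le_mul_of_nonneg_left hjensen hnpos.le
      _ = ∑ s, b (gInv (r s)) := by field_simp
  have hαCS : α * (ga ⬝ᵥ (θa - θ₀)) ≤ α * (euclNorm ga * euclNorm (θa - θ₀)) :=
    mul_le_mul_of_nonneg_left hCS hα
  have hell : ellLam θ₀ g r b lam m θa =
      (∑ s, (r s * (g s ⬝ᵥ (θa - θ₀)) - b (g s ⬝ᵥ (θa - θ₀))))
        - m * lam / 2 * (∑ i, (θa i - θ₀ i) ^ 2) := rfl
  rw [hdot0, hell, Finset.sum_sub_distrib] at h0
  rw [Finset.sum_sub_distrib] at hsum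
  rw [Finset.sum_sub_distrib] at hsum
  linarith
end
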